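/- arXiv:2008.09984 — 3 statements merged into one kernel-verified Lean document; each statement's English description precedes it below -/
import Mathlib

section
/- For l ≥ 1 and n ≥ 2, A_l(n) satisfies the recursion A_l(n)·log n = l · Σ A_l(n/d^i)·log d, where the sum runs over all pairs (d, i) with d ≥ 2, i ≥ 1, and d^i dividing n, with boundary condition A_l(1) = 1. -/
/-- `A l n`: number of unordered factorizations of `n` into parts `≥ 2`
of at most `l` colors (multisets of (value, color) pairs, colors in `{0,…,l-1}`). -/
noncomputable def A (l n : ℕ) : ℕ :=
  Set.ncard {s : Multiset (ℕ × ℕ) |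
    (∀ p ∈ s, 2 ≤ p.1 ∧ p.2 < l) ∧ (s.map Prod.fst).prod = n}

/-!
Every colored factorization `s` of `n` gives `log n = ∑_{(d,c)} count_{(d,c)}(s) · log d`.
Summing over all factorizations, the total multiplicity of a part `(d,c)` is
`∑_{i ≥ 1} #{s | (d,c) occurs in s at least i times}`, and removing `i` copies of `(d,c)` is a
bijection from these factorizations onto those of `n / d^i` (there are none unless `d^i ∣ n`).
All `l` colors `c` contribute the same amount.
-/

open Finset Real

theorem Finset.sum_eq_sum_range_card_filter_lt {α : Type*} (s : Finset α) (f : α → ℕ) {N : ℕ}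
    (h : ∀ x ∈ s, f x ≤ N) : ∑ x ∈ s, f x = ∑ i ∈ range N, #{x ∈ s | i < f x} := by
  calc ∑ x ∈ s, f x = ∑ x ∈ s, #{i ∈ range N | i < f x} := by
        refine sum_congr rfl fun x hx => ?_
        rw [show {i ∈ range N | i < f x} = range (f x) by ext; simp; grind, card_range]
    _ = _ := by simp_rw [card_filter]; exact sum_comm

theorem Multiset.sum_map_eq_sum_count_smul {α M : Type*} [DecidableEq α] [AddCommMonoid M]
    {s : Multiset α} {t : Finset α} (h : s.toFinset ⊆ t) (g : α → M) :
    (s.map g).sum = ∑ a ∈ t, s.count a • g a := by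
  rw [Finset.sum_multiset_map_count]
  exact sum_subset h fun a _ ha => by simp [Multiset.count_eq_zero.2 (by simpa using ha)]

def IsColoredFactorization (l n : ℕ) (s : Multiset (ℕ × ℕ)) : Prop :=
  (∀ p ∈ s, 2 ≤ p.1 ∧ p.2 < l) ∧ (s.map Prod.fst).prod = n

namespace IsColoredFactorization

variable {l n : ℕ} {s : Multiset (ℕ × ℕ)}

lemma card_lt (h : IsColoredFactorization l n s) : Multiset.card s < n := by
  have : 2 ^ Multiset.card s ≤ n := by
    simpa [← h.2] using Multiset.pow_card_le_prod (s := s.map Prod.fst) (a := 2)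
      (by simpa using fun p hp => (h.1 p hp).1)
  exact (Multiset.card s).lt_two_pow_self.trans_le this

lemma mem_grid (h : IsColoredFactorization l n s) {p : ℕ × ℕ} (hp : p ∈ s) :
    p ∈ range (n + 1) ×ˢ range l := by
  have hdvd : p.1 ∣ n := h.2 ▸ Multiset.dvd_prod (Multiset.mem_map_of_mem _ hp)
  have := Nat.le_of_dvd (by have := h.card_lt; omega) hdvd
  simp only [mem_product, mem_range]
  exact ⟨by omega, (h.1 p hp).2⟩

lemma log_eq_sum_count_mul_log (h : IsColoredFactorization l n s) :
    log n = ∑ p ∈ range (n + 1) ×ˢ range l, (s.count p : ℝ) * log p.1 := by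
  have hlog : log n = (s.map fun p => log p.1).sum := by
    rw [← h.2, Nat.cast_multiset_prod, log_multiset_prod, Multiset.map_map, Multiset.map_map]
    · rfl
    · simp only [Multiset.mem_map]
      rintro _ ⟨_, ⟨p, hp, rfl⟩, rfl⟩
      have := (h.1 p hp).1
      positivity
  rw [hlog, Multiset.sum_map_eq_sum_count_smul fun p hp =>
    h.mem_grid (Multiset.mem_toFinset.1 hp)]
  simp_rw [nsmul_eq_mul]

lemma add_replicate {m d c : ℕ} {t : Multiset (ℕ × ℕ)} (h : IsColoredFactorization l m t)
    (hd : 2 ≤ d) (hc : c < l) (i : ℕ) :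
    IsColoredFactorization l (m * d ^ i) (t + Multiset.replicate i (d, c)) := by
  refine ⟨fun p hp => ?_, by simp [h.2]⟩
  rcases Multiset.mem_add.1 hp with hp | hp
  · exact h.1 p hp
  · rw [Multiset.eq_of_mem_replicate hp]; exact ⟨hd, hc⟩

lemma sub_replicate (h : IsColoredFactorization l n s) {d c i : ℕ} (hi : i ≤ s.count (d, c)) :
    d ^ i ∣ n ∧ IsColoredFactorization l (n / d ^ i) (s - Multiset.replicate i (d, c)) := by
  set t := s - Multiset.replicate i (d, c)
  have hs : t + Multiset.replicate i (d, c) = s :=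
    tsub_add_cancel_of_le (Multiset.le_count_iff_replicate_le.1 hi)
  have hn : n = (t.map Prod.fst).prod * d ^ i := by simp [← h.2, ← hs]
  have hd : 0 < d ^ i :=
    Nat.pos_of_ne_zero fun h0 => by simp [h0] at hn; have := h.card_lt; omega
  refine ⟨Dvd.intro_left _ hn.symm, fun p hp => ?_, by rw [hn, Nat.mul_div_cancel _ hd]⟩
  exact h.1 p (Multiset.mem_of_le (Multiset.sub_le_self _ _) hp)

end IsColoredFactorization

lemma finite_setOf_isColoredFactorization (l n : ℕ) :
    {s | IsColoredFactorization l n s}.Finite := by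
  refine (n • (range (n + 1) ×ˢ range l).val).powerset.toFinset.finite_toSet.subset fun s hs => ?_
  rw [mem_coe, Multiset.mem_toFinset, Multiset.mem_powerset, Multiset.le_iff_count]
  intro p
  rw [Multiset.count_nsmul]
  by_cases hp : p ∈ s
  · rw [Multiset.count_eq_one_of_mem (nodup _) (hs.mem_grid hp), mul_one]
    exact (Multiset.count_le_card _ _).trans hs.card_lt.le
  · simp [Multiset.count_eq_zero.2 hp]

noncomputable def factorizations (l n : ℕ) : Finset (Multiset (ℕ × ℕ)) :=
  (finite_setOf_isColoredFactorization l n).toFinset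

variable {l n : ℕ}

lemma mem_factorizations {s : Multiset (ℕ × ℕ)} :
    s ∈ factorizations l n ↔ IsColoredFactorization l n s :=
  Set.Finite.mem_toFinset _

lemma A_eq_card_factorizations : A l n = #(factorizations l n) :=
  Set.ncard_eq_toFinset_card _ _

lemma A_one (l : ℕ) : A l 1 = 1 := by
  refine Set.ncard_eq_one.2 ⟨0, Set.eq_singleton_iff_unique_mem.2 ⟨⟨by simp, by simp⟩, ?_⟩⟩
  intro s (hs : IsColoredFactorization l 1 s)
  have := hs.card_lt
  exact Multiset.card_eq_zero.1 (by omega)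

lemma card_filter_le_count {d c : ℕ} (hd : 2 ≤ d) (hc : c < l) (i : ℕ) :
    #{s ∈ factorizations l n | i ≤ s.count (d, c)} =
      if d ^ i ∣ n then A l (n / d ^ i) else 0 := by
  split_ifs with hdvd
  · rw [A_eq_card_factorizations]
    refine card_nbij' (· - Multiset.replicate i (d, c)) (· + Multiset.replicate i (d, c))
      (fun s hs => ?_) (fun t ht => ?_) (fun s hs => ?_) (fun t _ => add_tsub_cancel_right _ _)
    · rw [mem_coe, mem_filter, mem_factorizations] at hs
      exact mem_factorizations.2 (hs.1.sub_replicate hs.2).2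
    · have := (mem_factorizations.1 ht).add_replicate hd hc i
      rw [Nat.div_mul_cancel hdvd] at this
      simp [mem_factorizations, this]
    · rw [mem_coe, mem_filter] at hs
      exact tsub_add_cancel_of_le (Multiset.le_count_iff_replicate_le.1 hs.2)
  · rw [card_eq_zero, filter_eq_empty_iff]
    exact fun s hs hi => hdvd ((mem_factorizations.1 hs).sub_replicate hi).1

lemma sum_count_eq {d c : ℕ} (hd : 2 ≤ d) (hc : c < l) :
    ∑ s ∈ factorizations l n, s.count (d, c) =
      ∑ i ∈ range n, if d ^ (i + 1) ∣ n then A l (n / d ^ (i + 1)) else 0 := by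
  rw [sum_eq_sum_range_card_filter_lt _ _ fun s hs =>
    (Multiset.count_le_card _ _).trans (mem_factorizations.1 hs).card_lt.le]
  simp_rw [Nat.lt_iff_add_one_le, card_filter_le_count hd hc]

lemma sum_count_mul_log_eq {c : ℕ} (hc : c < l) (d : ℕ) :
    (∑ s ∈ factorizations l n, (s.count (d, c) : ℝ)) * log d =
      ∑ i ∈ range (n + 1),
        if 2 ≤ d ∧ 1 ≤ i ∧ d ^ i ∣ n then (A l (n / d ^ i) : ℝ) * log d else 0 := by
  by_cases hd : 2 ≤ d
  · rw [sum_range_succ', ← Nat.cast_sum, sum_count_eq hd hc, Nat.cast_sum, sum_mul]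
    simp [hd, ite_mul]
  · have : log d = 0 := by interval_cases d <;> simp
    simp [this]

theorem A_log_recursion_general (l n : ℕ) :
    A l 1 = 1 ∧
    (A l n : ℝ) * Real.log n =
      l * ∑ p ∈ (Finset.range (n + 1) ×ˢ Finset.range (n + 1)).filter
            (fun p => 2 ≤ p.1 ∧ 1 ≤ p.2 ∧ p.1 ^ p.2 ∣ n),
          (A l (n / p.1 ^ p.2) : ℝ) * Real.log p.1 := by
  refine ⟨A_one l, ?_⟩
  rw [sum_filter, sum_product, mul_sum]
  calc (A l n : ℝ) * log n
      = ∑ s ∈ factorizations l n, ∑ p ∈ range (n + 1) ×ˢ range l, (s.count p : ℝ) * log p.1 := by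
        rw [A_eq_card_factorizations, ← nsmul_eq_mul, ← sum_const]
        exact sum_congr rfl fun s hs => (mem_factorizations.1 hs).log_eq_sum_count_mul_log
    _ = ∑ d ∈ range (n + 1), ∑ c ∈ range l,
          (∑ s ∈ factorizations l n, (s.count (d, c) : ℝ)) * log d := by
        rw [sum_comm, sum_product]
        simp_rw [sum_mul]
    _ = _ := sum_congr rfl fun d _ => by
        rw [sum_congr rfl fun c hc => sum_count_mul_log_eq (mem_range.1 hc) d, sum_const,
          card_range, nsmul_eq_mul]

theorem A_log_recursion (l n : ℕ) (hl : 1 ≤ l) (hn : 2 ≤ n) :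
    A l 1 = 1 ∧
    (A l n : ℝ) * Real.log n =
      l * ∑ p ∈ (Finset.range (n + 1) ×ˢ Finset.range (n + 1)).filter
            (fun p => 2 ≤ p.1 ∧ 1 ≤ p.2 ∧ p.1 ^ p.2 ∣ n),
          (A l (n / p.1 ^ p.2) : ℝ) * Real.log p.1 :=
  A_log_recursion_general l n
end

section
/- For every n ≥ 2 and l ≥ 1, the number of unordered prime factorizations of n using exactly l colors (every one of the l colors appears on at least one prime part) equals the number of ordered factorizations of n into exactly l parts each ≥ 2. -/
/-!
Sorting a colored prime factorization by color and multiplying the primes of color `i` gives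
the `i`-th part of an ordered factorization; that part is `≥ 2` exactly when color `i` occurs.
Conversely, coloring every prime factor of the `i`-th part with `i` recovers the multiset, by
uniqueness of prime factorization.
-/

/-- Number of unordered prime factorizations of `n` using exactly `l` colors. -/
noncomputable def primeCola (l n : ℕ) : ℕ :=
  Set.ncard {s : Multiset (ℕ × ℕ) |
    (∀ p ∈ s, p.1.Prime ∧ p.2 < l) ∧ (∀ c < l, ∃ p ∈ s, p.2 = c) ∧
    (s.map Prod.fst).prod = n}

/-- `fl l n`: the number of ordered factorizations of `n` into exactly `l`
parts `≥ 2` (as `l`-tuples). -/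
noncomputable def fl (l n : ℕ) : ℕ :=
  Set.ncard {t : Fin l → ℕ | (∀ i, 2 ≤ t i) ∧ ∏ i, t i = n}

open Function

namespace Multiset

theorem filter_finset_sum {ι α : Type*} (p : α → Prop) [DecidablePred p] (S : Finset ι)
    (f : ι → Multiset α) : (∑ i ∈ S, f i).filter p = ∑ i ∈ S, (f i).filter p := by
  induction S using Finset.cons_induction with
  | empty => simp
  | cons _ _ _ ih => simp only [Finset.sum_cons, filter_add, ih]

theorem map_finset_sum {ι α β : Type*} (g : α → β) (S : Finset ι) (f : ι → Multiset α) :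
    (∑ i ∈ S, f i).map g = ∑ i ∈ S, (f i).map g :=
  map_sum (mapAddMonoidHom g) f S

variable {ι α β : Type*} [Fintype ι] [DecidableEq β] {f : ι → β}

theorem sum_filter_snd_eq_self (hf : Injective f) {s : Multiset (α × β)}
    (hs : ∀ p ∈ s, p.2 ∈ Set.range f) : ∑ i, s.filter (·.2 = f i) = s := by
  classical
  ext a
  rw [count_sum']
  simp only [count_filter]
  by_cases ha : a ∈ s
  · obtain ⟨j, hj⟩ := hs a ha
    rw [Finset.sum_eq_single j (fun i _ hij => if_neg fun h => hij (hf (h.symm.trans hj.symm)))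
      (by simp), if_pos hj.symm]
  · simp [count_eq_zero_of_notMem ha]

theorem filter_snd_sum_map_pair (hf : Injective f) (t : ι → Multiset α) (j : ι) :
    (∑ i, (t i).map (·, f i)).filter (·.2 = f j) = (t j).map (·, f j) := by
  rw [filter_finset_sum, Finset.sum_eq_single j]
  · exact filter_eq_self.mpr (by simp)
  · intro i _ hij
    exact filter_eq_nil.mpr (by simpa using fun _ _ h => hij (hf h))
  · simp

end Multiset

theorem Nat.primeFactorsList_multiset_prod {q : Multiset ℕ} (hq : ∀ p ∈ q, p.Prime) :
    (q.prod.primeFactorsList : Multiset ℕ) = q := by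
  induction q using Quotient.inductionOn with
  | h L =>
    rw [Multiset.quot_mk_to_coe, Multiset.prod_coe]
    exact Multiset.coe_eq_coe.mpr
      (Nat.primeFactorsList_unique rfl (fun p hp => hq p (by simpa using hp))).symm

theorem Nat.two_le_multiset_prod_iff {q : Multiset ℕ} (hq : ∀ p ∈ q, p.Prime) :
    2 ≤ q.prod ↔ q ≠ 0 := by
  refine ⟨fun h hq0 => by simp [hq0] at h, fun hq0 => ?_⟩
  obtain ⟨p, hp⟩ := Multiset.exists_mem_of_ne_zero hq0
  have hpos : 0 < q.prod := Multiset.prod_pos fun a ha => (hq a ha).pos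
  exact (hq p hp).two_le.trans (Nat.le_of_dvd hpos (Multiset.dvd_prod hp))

section Coloring

variable {l : ℕ}

theorem prime_of_mem_map_fst_filter {s : Multiset (ℕ × ℕ)} (hs : ∀ p ∈ s, p.1.Prime) (c : ℕ) :
    ∀ p ∈ (s.filter (·.2 = c)).map Prod.fst, p.Prime := by
  simp only [Multiset.mem_map, Multiset.mem_filter]
  rintro _ ⟨q, ⟨hq, -⟩, rfl⟩
  exact hs q hq

def colorProducts (l : ℕ) (s : Multiset (ℕ × ℕ)) (i : Fin l) : ℕ :=
  ((s.filter (·.2 = (i : ℕ))).map Prod.fst).prod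

def coloredPrimeFactors (t : Fin l → ℕ) : Multiset (ℕ × ℕ) :=
  ∑ i, ((t i).primeFactorsList : Multiset ℕ).map (·, (i : ℕ))

theorem coloredPrimeFactors_colorProducts {s : Multiset (ℕ × ℕ)}
    (hs : ∀ p ∈ s, p.1.Prime ∧ p.2 < l) : coloredPrimeFactors (colorProducts l s) = s := by
  have hclass (i : Fin l) :
      ((colorProducts l s i).primeFactorsList : Multiset ℕ).map (·, (i : ℕ)) =
        s.filter (·.2 = (i : ℕ)) := by
    rw [colorProducts, Nat.primeFactorsList_multiset_prod
      (prime_of_mem_map_fst_filter (fun p hp => (hs p hp).1) i), Multiset.map_map]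
    conv_rhs => rw [← (s.filter (·.2 = (i : ℕ))).map_id]
    exact Multiset.map_congr rfl fun p hp => by simp [← (Multiset.mem_filter.mp hp).2]
  simp only [coloredPrimeFactors, hclass]
  exact Multiset.sum_filter_snd_eq_self Fin.val_injective fun p hp => ⟨⟨p.2, (hs p hp).2⟩, rfl⟩

theorem colorProducts_coloredPrimeFactors {t : Fin l → ℕ} (ht : ∀ i, t i ≠ 0) :
    colorProducts l (coloredPrimeFactors t) = t := by
  funext i
  rw [colorProducts, coloredPrimeFactors,
    Multiset.filter_snd_sum_map_pair Fin.val_injective, Multiset.map_map]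
  simp [Nat.prod_primeFactorsList (ht i)]

theorem prime_and_lt_of_mem_coloredPrimeFactors {t : Fin l → ℕ} {p : ℕ × ℕ}
    (hp : p ∈ coloredPrimeFactors t) : p.1.Prime ∧ p.2 < l := by
  obtain ⟨i, -, hi⟩ := Multiset.mem_sum.mp hp
  obtain ⟨q, hq, rfl⟩ := Multiset.mem_map.mp hi
  exact ⟨Nat.prime_of_mem_primeFactorsList (by simpa using hq), i.isLt⟩

theorem prod_colorProducts {s : Multiset (ℕ × ℕ)} (hs : ∀ p ∈ s, p.2 < l) :
    ∏ i, colorProducts l s i = (s.map Prod.fst).prod := by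
  conv_rhs => rw [← Multiset.sum_filter_snd_eq_self Fin.val_injective
    fun p hp => ⟨⟨p.2, hs p hp⟩, rfl⟩]
  rw [Multiset.map_finset_sum, Multiset.prod_sum]
  rfl

theorem two_le_colorProducts_iff {s : Multiset (ℕ × ℕ)} (hs : ∀ p ∈ s, p.1.Prime) (i : Fin l) :
    2 ≤ colorProducts l s i ↔ ∃ p ∈ s, p.2 = i := by
  rw [colorProducts, Nat.two_le_multiset_prod_iff (prime_of_mem_map_fst_filter hs i), Ne,
    Multiset.map_eq_zero, Multiset.filter_eq_nil]
  simp

end Coloring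

def exactlyColoredPrimeFactorizations (l n : ℕ) : Set (Multiset (ℕ × ℕ)) :=
  {s | (∀ p ∈ s, p.1.Prime ∧ p.2 < l) ∧ (∀ c < l, ∃ p ∈ s, p.2 = c) ∧
    (s.map Prod.fst).prod = n}

def orderedFactorizations (l n : ℕ) : Set (Fin l → ℕ) :=
  {t | (∀ i, 2 ≤ t i) ∧ ∏ i, t i = n}

theorem mapsTo_colorProducts (l n : ℕ) :
    Set.MapsTo (colorProducts l) (exactlyColoredPrimeFactorizations l n)
      (orderedFactorizations l n) := by
  rintro s ⟨hs, hcolors, hprod⟩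
  refine ⟨fun i => (two_le_colorProducts_iff (fun p hp => (hs p hp).1) i).mpr
    (hcolors i i.isLt), ?_⟩
  rw [prod_colorProducts fun p hp => (hs p hp).2, hprod]

theorem mapsTo_coloredPrimeFactors (l n : ℕ) :
    Set.MapsTo coloredPrimeFactors (orderedFactorizations l n)
      (exactlyColoredPrimeFactorizations l n) := by
  rintro t ⟨ht, hprod⟩
  have hs (p) (hp : p ∈ coloredPrimeFactors t) := prime_and_lt_of_mem_coloredPrimeFactors hp
  have hinv : colorProducts l (coloredPrimeFactors t) = t :=
    colorProducts_coloredPrimeFactors fun i => by have := ht i; omega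
  refine ⟨hs, fun c hc => ?_, ?_⟩
  · rw [← two_le_colorProducts_iff (fun p hp => (hs p hp).1) ⟨c, hc⟩, hinv]
    exact ht ⟨c, hc⟩
  · rw [← prod_colorProducts fun p hp => (hs p hp).2, hinv, hprod]

theorem bijOn_colorProducts (l n : ℕ) :
    Set.BijOn (colorProducts l) (exactlyColoredPrimeFactorizations l n)
      (orderedFactorizations l n) :=
  Set.InvOn.bijOn
    ⟨fun _ hs => coloredPrimeFactors_colorProducts hs.1,
      fun t ht => colorProducts_coloredPrimeFactors fun i => by have := ht.1 i; omega⟩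
    (mapsTo_colorProducts l n) (mapsTo_coloredPrimeFactors l n)

theorem exactly_colored_prime_factorizations_eq_ordered_factorizations_general
    (l n : ℕ) : primeCola l n = fl l n :=
  (bijOn_colorProducts l n).ncard_eq

theorem exactly_colored_prime_factorizations_eq_ordered_factorizations
    (l n : ℕ) (hl : 1 ≤ l) (hn : 2 ≤ n) :
    primeCola l n = fl l n :=
  exactly_colored_prime_factorizations_eq_ordered_factorizations_general l n
end

section
/- For l ≥ 1, the sequence (Ã_l(n))_{n≥1} of numbers of ordered l-colored factorizations (with Ã_l(1) = 1) is the Dirichlet inverse of the sequence c_l given by c_l(1) = 1 and c_l(n) = -l for n ≥ 2; equivalently, for all n ≥ 2, Σ_{d|n} c_l(d) · Ã_l(n/d) = 0. -/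
/-- `tA l n`: number of ordered factorizations of `n` into parts `≥ 2`
of at most `l` colors (finite sequences of (value, color) pairs). -/
noncomputable def tA (l n : ℕ) : ℕ :=
  Set.ncard {L : List (ℕ × ℕ) |
    (∀ p ∈ L, 2 ≤ p.1 ∧ p.2 < l) ∧ (L.map Prod.fst).prod = n}

/-! Removing the first factor `(d, c)` of a colored factorization of `n ≠ 1` leaves a colored
factorization of `n / d`, and `d > 1` runs over the divisors of `n`, `c` over `l` colors. Hence
`tA l n = l * ∑_{d ∣ n, d ≠ 1} tA l (n / d)`, which is the vanishing of `(c_l * tA l)(n)`. -/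

def coloredFactorizations (l n : ℕ) : Set (List (ℕ × ℕ)) :=
  {L | (∀ p ∈ L, 2 ≤ p.1 ∧ p.2 < l) ∧ (L.map Prod.fst).prod = n}

theorem tA_eq_ncard (l n : ℕ) : tA l n = (coloredFactorizations l n).ncard := rfl

namespace coloredFactorizations

variable {l n : ℕ}

theorem one_lt_prod {L : List (ℕ × ℕ)} (hL : ∀ p ∈ L, 2 ≤ p.1 ∧ p.2 < l) (hne : L ≠ []) :
    1 < (L.map Prod.fst).prod :=
  List.one_lt_prod_of_one_lt _
    (fun x hx => by obtain ⟨p, hp, rfl⟩ := List.mem_map.1 hx; exact (hL p hp).1)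
    (by simpa using hne)

theorem eq_singleton_nil (l : ℕ) : coloredFactorizations l 1 = {[]} := by
  ext L
  refine ⟨fun ⟨hL, hprod⟩ => ?_, by rintro rfl; simp [coloredFactorizations]⟩
  by_contra hne
  exact (one_lt_prod hL hne).ne' hprod

theorem eq_biUnion (hn : n ≠ 1) :
    coloredFactorizations l n =
      ⋃ p ∈ (↑(n.divisors.erase 1 ×ˢ Finset.range l) : Set (ℕ × ℕ)),
        List.cons p '' coloredFactorizations l (n / p.1) := by
  ext L
  simp only [coloredFactorizations, Set.mem_iUnion, Set.mem_image, Set.mem_ofPred_eq,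
    Finset.mem_coe, Finset.mem_product, Finset.mem_erase, Nat.mem_divisors, Finset.mem_range,
    exists_prop]
  constructor
  · rintro ⟨hL, hprod⟩
    obtain _ | ⟨a, t⟩ := L
    · exact absurd hprod.symm (by simpa using hn)
    have hn0 : n ≠ 0 := by have := one_lt_prod hL (List.cons_ne_nil a t); omega
    have ha := hL a List.mem_cons_self
    have ht : ∀ p ∈ t, 2 ≤ p.1 ∧ p.2 < l := fun p hp => hL p (List.mem_cons_of_mem a hp)
    simp only [List.map_cons, List.prod_cons] at hprod
    refine ⟨a, ⟨⟨by omega, ⟨_, hprod.symm⟩, hn0⟩, ha.2⟩, t, ⟨ht, ?_⟩, rfl⟩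
    rw [← hprod, Nat.mul_div_cancel_left _ (by omega)]
  · rintro ⟨p, ⟨⟨hp1, hpn, hn0⟩, hpl⟩, t, ⟨ht, hprod⟩, rfl⟩
    have hp2 : 2 ≤ p.1 := by
      have := Nat.pos_of_dvd_of_pos hpn (Nat.pos_of_ne_zero hn0); omega
    refine ⟨?_, by simp [hprod, Nat.mul_div_cancel' hpn]⟩
    rintro q (_ | ⟨_, hq⟩)
    exacts [⟨hp2, hpl⟩, ht q hq]

theorem finite (l n : ℕ) : (coloredFactorizations l n).Finite := by
  induction n using Nat.strong_induction_on with
  | _ n ih =>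
    rcases eq_or_ne n 1 with rfl | hn
    · simp [eq_singleton_nil]
    rw [eq_biUnion hn]
    refine Set.Finite.biUnion (Finset.finite_toSet _) fun p hp => (ih _ ?_).image _
    simp only [Finset.mem_coe, Finset.mem_product, Finset.mem_erase, Nat.mem_divisors] at hp
    obtain ⟨⟨hp1, hpn, hn0⟩, -⟩ := hp
    have := Nat.pos_of_dvd_of_pos hpn (Nat.pos_of_ne_zero hn0)
    exact Nat.div_lt_self (by omega) (by omega)

theorem ncard_eq_sum (hn : n ≠ 1) :
    (coloredFactorizations l n).ncard =
      l * ∑ d ∈ n.divisors.erase 1, (coloredFactorizations l (n / d)).ncard := by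
  have hdisj : Set.PairwiseDisjoint (↑(n.divisors.erase 1 ×ˢ Finset.range l))
      fun p : ℕ × ℕ => List.cons p '' coloredFactorizations l (n / p.1) := by
    intro p _ q _ hpq
    refine Set.disjoint_left.2 ?_
    rintro _ ⟨s, -, rfl⟩ ⟨t, -, hts⟩
    exact hpq (List.cons_eq_cons.1 hts).1.symm
  rw [eq_biUnion hn, (Finset.finite_toSet _).ncard_biUnion (fun p _ => (finite l _).image _) hdisj,
    finsum_mem_coe_finset, Finset.sum_product, Finset.mul_sum]
  simp [Set.ncard_image_of_injective _ List.cons_injective]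

end coloredFactorizations

theorem tA_one (l : ℕ) : tA l 1 = 1 := by
  rw [tA_eq_ncard, coloredFactorizations.eq_singleton_nil, Set.ncard_singleton]

theorem tA_eq_mul_sum {l n : ℕ} (hn : n ≠ 1) :
    tA l n = l * ∑ d ∈ n.divisors.erase 1, tA l (n / d) :=
  coloredFactorizations.ncard_eq_sum hn

theorem tA_dirichlet_inverse_general (l : ℕ) :
    tA l 1 = 1 ∧
    ∀ n : ℕ, 2 ≤ n →
      ∑ d ∈ n.divisors, (if d = 1 then 1 else (-(l : ℤ))) * (tA l (n / d) : ℤ) = 0 := by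
  refine ⟨tA_one l, fun n hn => ?_⟩
  rw [← Finset.add_sum_erase _ _ (Nat.one_mem_divisors.2 (by omega)),
    Finset.sum_congr rfl fun d hd => by rw [if_neg (Finset.ne_of_mem_erase hd)],
    if_pos rfl, Nat.div_one, tA_eq_mul_sum (by omega : n ≠ 1)]
  push_cast
  simp [Finset.mul_sum]

theorem tA_dirichlet_inverse (l : ℕ) (hl : 1 ≤ l) :
    tA l 1 = 1 ∧
    ∀ n : ℕ, 2 ≤ n →
      ∑ d ∈ n.divisors, (if d = 1 then 1 else (-(l : ℤ))) * (tA l (n / d) : ℤ) = 0 :=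
  tA_dirichlet_inverse_general l
end
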